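/- arXiv:1711.08860 — 4 statements merged into one kernel-verified Lean document; each statement's English description precedes it below -/
import Mathlib

section
/- For every real n×n matrix B all of whose leading principal minors are positive, there exists an upper-triangular n×n matrix C with all diagonal entries equal to 1 such that the product B*C is symmetric. -/
/-!
Induction on `n`. If `C₀` makes `A * C₀` symmetric for the top-left `n × n` block `A` of `B`,
border it by a new last column `(x, 1)` and a zero last row. The top-left block of the product
is still `A * C₀`, and symmetry of the rest asks that the new last column, `A x + b`, equal the
last row of the product, a vector `w` determined by `C₀`. Since `det A` is a leading minor, `A`
is invertible and `x = A⁻¹ (w - b)` works.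
-/

open Matrix

/-- The determinant of the top-left `r × r` submatrix of `B`. -/
def leadMinor {n : ℕ} (B : Matrix (Fin n) (Fin n) ℝ) (r : ℕ) (h : r ≤ n) : ℝ :=
  (B.submatrix (Fin.castLE h) (Fin.castLE h)).det

namespace Matrix

variable {K : Type*} [Field K] {n : ℕ}

/-- `C₀` bordered by the last column `(x, 1)` and the last row `(0, 1)`. -/
def borderUnitCol (C₀ : Matrix (Fin n) (Fin n) K) (x : Fin n → K) :
    Matrix (Fin (n + 1)) (Fin (n + 1)) K :=
  of fun i j => Fin.lastCases (motive := fun _ => K) (Fin.snoc (α := fun _ => K) x 1 i)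
    (fun j' => Fin.snoc (α := fun _ => K) (C₀ · j') 0 i) j

section borderUnitCol

variable (C₀ : Matrix (Fin n) (Fin n) K) (x : Fin n → K)

@[simp] lemma borderUnitCol_castSucc_castSucc (i j : Fin n) :
    borderUnitCol C₀ x i.castSucc j.castSucc = C₀ i j := by
  simp [borderUnitCol]

@[simp] lemma borderUnitCol_castSucc_last (i : Fin n) :
    borderUnitCol C₀ x i.castSucc (Fin.last n) = x i := by
  simp [borderUnitCol]

@[simp] lemma borderUnitCol_last_castSucc (j : Fin n) :
    borderUnitCol C₀ x (Fin.last n) j.castSucc = 0 := by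
  simp [borderUnitCol]

@[simp] lemma borderUnitCol_last_last : borderUnitCol C₀ x (Fin.last n) (Fin.last n) = 1 := by
  simp [borderUnitCol]

lemma blockTriangular_borderUnitCol (h : C₀.BlockTriangular id) :
    (borderUnitCol C₀ x).BlockTriangular id := by
  intro i j hij
  induction j using Fin.lastCases with
  | last => exact absurd hij (Fin.le_last i).not_gt
  | cast j =>
    induction i using Fin.lastCases with
    | last => simp
    | cast i => simpa using h (by simpa using hij)

lemma borderUnitCol_apply_self (h : ∀ i, C₀ i i = 1) (i : Fin (n + 1)) : borderUnitCol C₀ x i i = 1 := by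
  induction i using Fin.lastCases with
  | last => simp
  | cast i => simpa using h i

variable (B : Matrix (Fin (n + 1)) (Fin (n + 1)) K)

lemma mul_borderUnitCol_castSucc_castSucc (i j : Fin n) :
    (B * borderUnitCol C₀ x) i.castSucc j.castSucc
      = (B.submatrix Fin.castSucc Fin.castSucc * C₀) i j := by
  simp [mul_apply, Fin.sum_univ_castSucc]

lemma mul_borderUnitCol_castSucc_last (i : Fin n) :
    (B * borderUnitCol C₀ x) i.castSucc (Fin.last n)
      = (B.submatrix Fin.castSucc Fin.castSucc *ᵥ x) i + B i.castSucc (Fin.last n) := by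
  simp [mul_apply, mulVec, dotProduct, Fin.sum_univ_castSucc]

lemma mul_borderUnitCol_last_castSucc (j : Fin n) :
    (B * borderUnitCol C₀ x) (Fin.last n) j.castSucc
      = ((fun k => B (Fin.last n) k.castSucc) ᵥ* C₀) j := by
  simp [mul_apply, vecMul, dotProduct, Fin.sum_univ_castSucc]

end borderUnitCol

lemma exists_isSymm_mul_borderUnitCol (B : Matrix (Fin (n + 1)) (Fin (n + 1)) K)
    {C₀ : Matrix (Fin n) (Fin n) K} (hdet : (B.submatrix Fin.castSucc Fin.castSucc).det ≠ 0)
    (hsymm : (B.submatrix Fin.castSucc Fin.castSucc * C₀).IsSymm) :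
    ∃ x, (B * borderUnitCol C₀ x).IsSymm := by
  set A := B.submatrix Fin.castSucc Fin.castSucc
  set w := (fun k => B (Fin.last n) k.castSucc) ᵥ* C₀
  set b := fun i => B (Fin.castSucc i) (Fin.last n)
  have hx : A *ᵥ (A⁻¹ *ᵥ (w - b)) + b = w := by
    rw [mulVec_mulVec, mul_nonsing_inv A (isUnit_iff_ne_zero.mpr hdet), one_mulVec, sub_add_cancel]
  refine ⟨A⁻¹ *ᵥ (w - b), IsSymm.ext fun i j => ?_⟩
  induction i using Fin.lastCases with
  | last =>
    induction j using Fin.lastCases with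
    | last => rfl
    | cast j =>
      rw [mul_borderUnitCol_castSucc_last, mul_borderUnitCol_last_castSucc]
      exact congrFun hx j
  | cast i =>
    induction j using Fin.lastCases with
    | last =>
      rw [mul_borderUnitCol_castSucc_last, mul_borderUnitCol_last_castSucc]
      exact (congrFun hx i).symm
    | cast j =>
      rw [mul_borderUnitCol_castSucc_castSucc, mul_borderUnitCol_castSucc_castSucc]
      exact hsymm.apply i j

theorem exists_blockTriangular_mul_isSymm_of_det_ne_zero (B : Matrix (Fin n) (Fin n) K)
    (hB : ∀ r (h : r < n), (B.submatrix (Fin.castLE h.le) (Fin.castLE h.le)).det ≠ 0) :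
    ∃ C : Matrix (Fin n) (Fin n) K,
      C.BlockTriangular id ∧ (∀ i, C i i = 1) ∧ (B * C).IsSymm := by
  induction n with
  | zero => exact ⟨1, blockTriangular_one, fun i => i.elim0, IsSymm.ext fun i => i.elim0⟩
  | succ n ih =>
    obtain ⟨C₀, hC₀, hC₀diag, hsymm⟩ := ih (B.submatrix Fin.castSucc Fin.castSucc) fun r hr =>
      hB r (hr.trans n.lt_succ_self)
    obtain ⟨x, hx⟩ := exists_isSymm_mul_borderUnitCol B (hB n n.lt_succ_self) hsymm
    exact ⟨borderUnitCol C₀ x, blockTriangular_borderUnitCol C₀ x hC₀,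
      borderUnitCol_apply_self C₀ x hC₀diag, hx⟩

end Matrix

theorem stmt0 {n : ℕ} (B : Matrix (Fin n) (Fin n) ℝ)
    (hB : ∀ r : ℕ, 1 ≤ r → ∀ h : r ≤ n, 0 < leadMinor B r h) :
    ∃ C : Matrix (Fin n) (Fin n) ℝ,
      C.BlockTriangular id ∧ (∀ i, C i i = 1) ∧ (B * C).IsSymm := by
  refine exists_blockTriangular_mul_isSymm_of_det_ne_zero B fun r hr => ?_
  rcases Nat.eq_zero_or_pos r with rfl | hr₀
  · simp
  · exact (hB r hr₀ hr.le).ne'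
end

section
/- If g is an n×n real positive definite symmetric matrix and g = b k where b is upper triangular with positive diagonal entries and k is orthogonal, then every leading principal minor of k is positive. -/
/-!
Orthogonality of `k` turns `g = b k` into `kᵀ = g⁻¹ b`. Since `b` is upper triangular, the leading
`r × r` block of `g⁻¹ b` is the product of the leading blocks of `g⁻¹` and of `b`. The first is
positive definite because `g⁻¹` is, and the second is upper triangular with positive diagonal, so
both have positive determinant; and `k` has the same leading minors as `kᵀ`.
-/

open Matrix

namespace Matrix

variable {l m n o α R : Type*}

theorem submatrix_mul_of_blockTriangular [Fintype m] [Fintype n] [NonUnitalNonAssocSemiring R]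
    [LinearOrder α] (A : Matrix l m R) {B : Matrix m m R} {b : m → α}
    (hB : B.BlockTriangular b) (f : o → l) {e : n → m} (he : Function.Injective e)
    (hlow : ∀ i ∉ Set.range e, ∀ j, b (e j) < b i) :
    (A * B).submatrix f e = A.submatrix f e * B.submatrix e e := by
  ext i j
  simp only [submatrix_apply, mul_apply]
  exact (Fintype.sum_of_injective e he _ _
    (fun k hk => by rw [hB (hlow k hk j), mul_zero]) fun _ => rfl).symm

theorem det_pos_of_isUpperTriangular [LinearOrder m] [Fintype m] [CommRing R] [PartialOrder R]
    [IsStrictOrderedRing R] {M : Matrix m m R} (hM : M.IsUpperTriangular)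
    (hdiag : ∀ i, 0 < M i i) : 0 < M.det := by
  rw [det_of_isUpperTriangular hM]
  exact Finset.prod_pos fun i _ => hdiag i

end Matrix

section leadMinor

variable {n : ℕ}

theorem leadMinor_transpose (B : Matrix (Fin n) (Fin n) ℝ) (r : ℕ) (h : r ≤ n) :
    leadMinor Bᵀ r h = leadMinor B r h := by
  rw [leadMinor, ← transpose_submatrix, det_transpose, leadMinor]

theorem leadMinor_mul_of_isUpperTriangular (A : Matrix (Fin n) (Fin n) ℝ)
    {B : Matrix (Fin n) (Fin n) ℝ} (hB : B.IsUpperTriangular) (r : ℕ) (h : r ≤ n) :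
    leadMinor (A * B) r h = leadMinor A r h * leadMinor B r h := by
  rw [leadMinor, submatrix_mul_of_blockTriangular A hB _ (Fin.castLE_injective h), det_mul,
    leadMinor, leadMinor]
  rintro i hi j
  have : r ≤ (i : ℕ) := by
    by_contra! hlt
    exact hi ⟨⟨i, hlt⟩, rfl⟩
  exact Fin.lt_def.mpr (j.isLt.trans_le this)

theorem leadMinor_pos_of_posDef {A : Matrix (Fin n) (Fin n) ℝ} (hA : A.PosDef) (r : ℕ)
    (h : r ≤ n) : 0 < leadMinor A r h :=
  (hA.submatrix (Fin.castLE_injective h)).det_pos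

theorem leadMinor_pos_of_isUpperTriangular {B : Matrix (Fin n) (Fin n) ℝ}
    (hB : B.IsUpperTriangular) (hdiag : ∀ i, 0 < B i i) (r : ℕ) (h : r ≤ n) :
    0 < leadMinor B r h :=
  det_pos_of_isUpperTriangular (hB.submatrix (f := Fin.castLE h)) fun _ => hdiag _

end leadMinor

theorem stmt5 {n : ℕ} (g b k : Matrix (Fin n) (Fin n) ℝ)
    (hg : g.PosDef) (hgbk : g = b * k)
    (hb : b.BlockTriangular id) (hbd : ∀ i, 0 < b i i)
    (hk : kᵀ * k = 1) :
    ∀ r : ℕ, 1 ≤ r → ∀ h : r ≤ n, 0 < leadMinor k r h := by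
  intro r _ h
  have hkt : kᵀ = g⁻¹ * b := by
    calc kᵀ = g⁻¹ * g * kᵀ := by rw [nonsing_inv_mul g hg.det_pos.ne'.isUnit, Matrix.one_mul]
      _ = g⁻¹ * b := by rw [hgbk, Matrix.mul_assoc, Matrix.mul_assoc, mul_eq_one_comm.mp hk,
          Matrix.mul_one]
  rw [← leadMinor_transpose, hkt, leadMinor_mul_of_isUpperTriangular _ hb]
  exact mul_pos (leadMinor_pos_of_posDef hg.inv r h) (leadMinor_pos_of_isUpperTriangular hb hbd r h)
end

section
/- If k is an n×n real orthogonal matrix all of whose leading principal minors are positive, then there exists an upper triangular real matrix b with positive diagonal entries such that b⁻¹ k is symmetric and positive definite. Consequently k lies in the image of the set of positive definite symmetric matrices under the Iwasawa projection to the orthogonal group. -/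
open Matrix

/-!
Since the leading principal minors of `k` are positive, Gaussian elimination without pivoting
writes `k = L U` with `L` unit lower triangular and `U` upper triangular with positive diagonal.
Orthogonality `kᵀ k = 1` then reads `Lᵀ k Uᵀ = 1`, so `b := k Uᵀ U = (Lᵀ)⁻¹ U` is upper
triangular with the diagonal of `U`, and `b⁻¹ k = (Uᵀ U)⁻¹` is positive definite.
-/

namespace Matrix

section Triangular

variable {m R : Type*} [Fintype m] [LinearOrder m]

theorem IsUpperTriangular.diag_mul [NonUnitalNonAssocSemiring R] {M N : Matrix m m R}
    (hM : M.IsUpperTriangular) (hN : N.IsUpperTriangular) :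
    (M * N).diag = M.diag * N.diag := by
  funext i
  simp only [diag_apply, Pi.mul_apply, mul_apply]
  refine Finset.sum_eq_single i (fun j _ hji => ?_) (by simp)
  rcases hji.lt_or_gt with hlt | hgt
  · rw [hM hlt, zero_mul]
  · rw [hN hgt, mul_zero]

variable [CommRing R] [DecidableEq m]

theorem det_eq_one_of_isUpperTriangular {T : Matrix m m R} (hT : T.IsUpperTriangular)
    (hdiag : ∀ i, T i i = 1) : T.det = 1 := by
  simp [det_of_isUpperTriangular hT, hdiag]

theorem IsUpperTriangular.of_unitriangular_mul_eq {T M U : Matrix m m R}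
    (hT : T.IsUpperTriangular) (hdiag : ∀ i, T i i = 1) (hU : U.IsUpperTriangular)
    (h : T * M = U) : M.IsUpperTriangular ∧ M.diag = U.diag := by
  have : Invertible T :=
    T.invertibleOfIsUnitDet (by simp [det_eq_one_of_isUpperTriangular hT hdiag])
  have hM : M.IsUpperTriangular := by
    rw [← inv_mul_cancel_left_of_invertible T M, h]
    exact (blockTriangular_inv_of_blockTriangular hT).mul hU
  refine ⟨hM, ?_⟩
  rw [← h, hT.diag_mul hM]
  funext i
  simp [hdiag]

end Triangular

theorem isUpperTriangular_reindex_fromBlocks {R : Type*} [Zero R] {n : ℕ}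
    {A : Matrix (Fin n) (Fin n) R} (hA : A.IsUpperTriangular) (B : Matrix (Fin n) (Fin 1) R)
    (d : Matrix (Fin 1) (Fin 1) R) :
    (reindex finSumFinEquiv finSumFinEquiv (fromBlocks A B 0 d)).IsUpperTriangular := by
  rw [IsUpperTriangular, blockTriangular_reindex_iff]
  rintro (i | i) (j | j) hji
  · exact hA hji
  · simp [Fin.lt_def] at hji
    omega
  · rfl
  · simp [Subsingleton.elim i j] at hji

end Matrix

theorem leadMinor_zero {n : ℕ} (A : Matrix (Fin n) (Fin n) ℝ) (h : 0 ≤ n) :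
    leadMinor A 0 h = 1 :=
  det_isEmpty

theorem leadMinor_self {n : ℕ} (A : Matrix (Fin n) (Fin n) ℝ) :
    leadMinor A n le_rfl = A.det := by
  simp [leadMinor]

theorem leadMinor_toBlocks₁₁ {n : ℕ} (A : Matrix (Fin (n + 1)) (Fin (n + 1)) ℝ) (r : ℕ)
    (h : r ≤ n) :
    leadMinor (reindex finSumFinEquiv.symm finSumFinEquiv.symm A).toBlocks₁₁ r h
      = leadMinor A r (h.trans n.le_succ) :=
  rfl

theorem exists_lower_mul_upper_of_leadMinor_pos : ∀ {n : ℕ} (A : Matrix (Fin n) (Fin n) ℝ),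
    (∀ r (h : r ≤ n), 0 < leadMinor A r h) →
    ∃ L U : Matrix (Fin n) (Fin n) ℝ, L.IsLowerTriangular ∧ (∀ i, L i i = 1) ∧
      U.IsUpperTriangular ∧ (∀ i, 0 < U i i) ∧ A = L * U
  | 0, _, _ => ⟨1, 1, blockTriangular_one, finZeroElim, blockTriangular_one, finZeroElim,
      Subsingleton.elim _ _⟩
  | n + 1, A, hA => by
    set e : Fin n ⊕ Fin 1 ≃ Fin (n + 1) := finSumFinEquiv
    set M := reindex e.symm e.symm A with hM
    obtain ⟨L', U', hL', hL'diag, hU', hU'diag, hM₁₁⟩ :=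
      exists_lower_mul_upper_of_leadMinor_pos M.toBlocks₁₁ fun r h => by
        rw [leadMinor_toBlocks₁₁]; exact hA r _
    have hdetL' : L'.det = 1 := by
      rw [← det_transpose]; exact det_eq_one_of_isUpperTriangular hL'.transpose hL'diag
    have hdetU' : 0 < U'.det := by
      have h := hA n n.le_succ
      rwa [← leadMinor_toBlocks₁₁ A n le_rfl, leadMinor_self, hM₁₁, det_mul, hdetL',
        one_mul] at h
    have hdetM : 0 < M.det := by
      simpa [hM, leadMinor_self] using hA (n + 1) le_rfl
    -- `S` is the Schur complement of the leading block `L' U'` in `M`.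
    set X := M.toBlocks₂₁ * U'⁻¹
    set Y := L'⁻¹ * M.toBlocks₁₂
    set S := M.toBlocks₂₂ - X * Y
    have hfactor : M = fromBlocks L' 0 X 1 * fromBlocks U' Y 0 S := by
      have hL'unit : IsUnit L'.det := by simp [hdetL']
      have hU'unit : IsUnit U'.det := hdetU'.ne'.isUnit
      rw [fromBlocks_multiply]
      conv_lhs => rw [← fromBlocks_toBlocks M]
      simp [X, Y, S, hM₁₁, mul_nonsing_inv_cancel_left _ _ hL'unit,
        nonsing_inv_mul_cancel_right _ _ hU'unit]
    have hS : 0 < S 0 0 := by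
      rw [hfactor, det_mul, det_fromBlocks_zero₁₂, det_fromBlocks_zero₂₁, hdetL', det_one,
        one_mul, one_mul, det_unique S] at hdetM
      exact pos_of_mul_pos_right hdetM hdetU'.le
    refine ⟨reindex e e (fromBlocks L' 0 X 1), reindex e e (fromBlocks U' Y 0 S), ?_, ?_,
      isUpperTriangular_reindex_fromBlocks hU' Y S, ?_, ?_⟩
    · simpa [transpose_reindex, fromBlocks_transpose] using
        (isUpperTriangular_reindex_fromBlocks hL'.transpose Xᵀ 1).transpose
    · intro i
      obtain ⟨i | i, rfl⟩ := e.surjective i <;> simp [hL'diag]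
    · intro i
      obtain ⟨i | i, rfl⟩ := e.surjective i
      · simpa using hU'diag i
      · simpa [Subsingleton.elim i 0] using hS
    · rw [reindex_apply, reindex_apply, submatrix_mul_equiv, ← hfactor, hM]
      simp

theorem stmt6 {n : ℕ} (k : Matrix (Fin n) (Fin n) ℝ)
    (hk : kᵀ * k = 1)
    (hpos : ∀ r : ℕ, 1 ≤ r → ∀ h : r ≤ n, 0 < leadMinor k r h) :
    ∃ b : Matrix (Fin n) (Fin n) ℝ,
      b.BlockTriangular id ∧ (∀ i, 0 < b i i) ∧ (b⁻¹ * k).PosDef ∧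
      ∃ g : Matrix (Fin n) (Fin n) ℝ, g.PosDef ∧ k = b * g := by
  obtain ⟨L, U, hL, hLdiag, hU, hUdiag, hkLU⟩ :=
    exists_lower_mul_upper_of_leadMinor_pos k fun r h => by
      rcases r.eq_zero_or_pos with rfl | hr
      · rw [leadMinor_zero]; exact one_pos
      · exact hpos r hr h
  have hUunit : IsUnit U :=
    (isUnit_iff_isUnit_det U).mpr <| IsUnit.mk0 _ <| by
      rw [det_of_isUpperTriangular hU]
      exact Finset.prod_ne_zero_iff.mpr fun i _ => (hUdiag i).ne'
  set P := Uᵀ * U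
  have hP : P.PosDef := PosDef.conjTranspose_mul_self U (mulVec_injective_of_isUnit hUunit)
  have hLb : Lᵀ * (k * P) = U := by
    have h : Uᵀ * (Lᵀ * k) = 1 := by rw [← Matrix.mul_assoc, ← transpose_mul, ← hkLU, hk]
    rw [← Matrix.mul_assoc, ← Matrix.mul_assoc, mul_eq_one_comm.mp h, Matrix.one_mul]
  obtain ⟨hb, hbdiag⟩ := IsUpperTriangular.of_unitriangular_mul_eq hL.transpose hLdiag hU hLb
  have hbk : (k * P)⁻¹ * k = P⁻¹ := by
    rw [Matrix.mul_inv_rev, Matrix.mul_assoc, inv_eq_left_inv hk, hk, Matrix.mul_one]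
  refine ⟨k * P, hb, fun i => (congrFun hbdiag i ▸ hUdiag i : 0 < (k * P).diag i),
    hbk ▸ hP.inv, P⁻¹, hP.inv, ?_⟩
  rw [Matrix.mul_assoc, mul_nonsing_inv _ ((isUnit_iff_isUnit_det P).mp hP.isUnit),
    Matrix.mul_one]
end

section
/- Let κ denote the Iwasawa projection from GL_n(ℝ) to O(n) sending g = b k (b upper triangular with positive diagonal, k orthogonal) to k. Then the image under κ of the set of positive definite symmetric matrices equals the set of orthogonal matrices all of whose leading principal minors are positive. -/
open Matrix

section IwasawaAux

open Finset

private lemma sum_castLE {n r : ℕ} (h : r ≤ n) (f : Fin n → ℝ)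
    (hf : ∀ p : Fin n, r ≤ (p : ℕ) → f p = 0) :
    ∑ p : Fin n, f p = ∑ q : Fin r, f (Fin.castLE h q) := by
  rw [← Finset.sum_subset (Finset.subset_univ (Finset.univ.map (Fin.castLEEmb h)))
      (fun x _ hx => hf x (by
        by_contra hc
        push_neg at hc
        exact hx (Finset.mem_map.mpr ⟨⟨(x : ℕ), hc⟩, Finset.mem_univ _, Fin.ext rfl⟩)))]
  rw [Finset.sum_map]
  rfl

private lemma submatrix_mul_upper {n r : ℕ} (h : r ≤ n) (A B : Matrix (Fin n) (Fin n) ℝ)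
    (hB : B.BlockTriangular id) :
    (A * B).submatrix (Fin.castLE h) (Fin.castLE h)
      = A.submatrix (Fin.castLE h) (Fin.castLE h) * B.submatrix (Fin.castLE h) (Fin.castLE h) := by
  ext i j
  simp only [submatrix_apply, mul_apply]
  rw [sum_castLE h _ (fun p hp => by
    rw [hB (show id (Fin.castLE h j) < id p by simp [Fin.lt_def]; omega), mul_zero])]

private lemma leadMinor_transpose' {n r : ℕ} (h : r ≤ n) (A : Matrix (Fin n) (Fin n) ℝ) :
    ((Aᵀ).submatrix (Fin.castLE h) (Fin.castLE h)).det
      = (A.submatrix (Fin.castLE h) (Fin.castLE h)).det := by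
  rw [show (Aᵀ).submatrix (Fin.castLE h) (Fin.castLE h)
        = (A.submatrix (Fin.castLE h) (Fin.castLE h))ᵀ from rfl, det_transpose]

private lemma diag_mul_upper {n : ℕ} {A B : Matrix (Fin n) (Fin n) ℝ}
    (hA : A.BlockTriangular id) (hB : B.BlockTriangular id) (i : Fin n) :
    (A * B) i i = A i i * B i i := by
  rw [mul_apply]
  refine Finset.sum_eq_single i (fun p _ hp => ?_) (fun hi => absurd (Finset.mem_univ i) hi)
  rcases lt_or_gt_of_ne hp with hlt | hgt
  · rw [hA (show id p < id i from hlt), zero_mul]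
  · rw [hB (show id i < id p from hgt), mul_zero]

private lemma diag_mul_lower {n : ℕ} {A B : Matrix (Fin n) (Fin n) ℝ}
    (hA : Aᵀ.BlockTriangular id) (hB : Bᵀ.BlockTriangular id) (i : Fin n) :
    (A * B) i i = A i i * B i i := by
  rw [mul_apply]
  refine Finset.sum_eq_single i (fun p _ hp => ?_) (fun hi => absurd (Finset.mem_univ i) hi)
  rcases lt_or_gt_of_ne hp with hlt | hgt
  · have h0 : B p i = 0 := hB (show id p < id i from hlt)
    rw [h0, mul_zero]
  · have h0 : A i p = 0 := hA (show id i < id p from hgt)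
    rw [h0, zero_mul]

private lemma posDef_submatrix_castLE {n r : ℕ} (h : r ≤ n) {M : Matrix (Fin n) (Fin n) ℝ}
    (hM : M.PosDef) : (M.submatrix (Fin.castLE h) (Fin.castLE h)).PosDef := by
  refine PosDef.of_dotProduct_mulVec_pos (hM.1.submatrix _) fun x hx => ?_
  set y : Fin n → ℝ := fun p => if hp : (p : ℕ) < r then x ⟨(p : ℕ), hp⟩ else 0 with hy
  have hyc : ∀ q : Fin r, y (Fin.castLE h q) = x q := by
    intro q
    simp only [hy]
    rw [dif_pos (show ((Fin.castLE h q : Fin n) : ℕ) < r from q.isLt)]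
    exact congrArg x (Fin.ext rfl)
  have hy0 : ∀ p : Fin n, r ≤ (p : ℕ) → y p = 0 := fun p hp => dif_neg (by omega)
  have hyne : y ≠ 0 := by
    intro h0
    apply hx
    ext q
    have := congrFun h0 (Fin.castLE h q)
    rwa [hyc] at this
  have key : dotProduct (star x) ((M.submatrix (Fin.castLE h) (Fin.castLE h)) *ᵥ x)
      = dotProduct (star y) (M *ᵥ y) := by
    simp only [dotProduct, mulVec, Pi.star_apply, star_trivial]
    rw [sum_castLE h _ (fun p hp => by rw [hy0 p hp, zero_mul])]
    refine Finset.sum_congr rfl fun q _ => ?_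
    rw [hyc]
    congr 1
    rw [sum_castLE h _ (fun p hp => by rw [hy0 p hp, mul_zero])]
    refine Finset.sum_congr rfl fun q' _ => ?_
    rw [hyc, submatrix_apply]
  rw [key]
  exact hM.dotProduct_mulVec_pos hyne

private lemma posDef_transpose_mul_self {n : ℕ} {N : Matrix (Fin n) (Fin n) ℝ}
    (hN : IsUnit N.det) : (Nᵀ * N).PosDef := by
  have hherm : (Nᵀ * N).IsHermitian := by
    simpa [conjTranspose_eq_transpose_of_trivial] using (isHermitian_conjTranspose_mul_self N)
  refine PosDef.of_dotProduct_mulVec_pos hherm fun x hx => ?_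
  have h1 : dotProduct (star x) ((Nᵀ * N) *ᵥ x) = dotProduct (N *ᵥ x) (N *ᵥ x) := by
    rw [show star x = x from funext fun i => star_trivial _, ← mulVec_mulVec,
      dotProduct_mulVec, vecMul_transpose]
  rw [h1]
  have hne : N *ᵥ x ≠ 0 := by
    intro h0
    apply hx
    have : (N⁻¹ * N) *ᵥ x = N⁻¹ *ᵥ (N *ᵥ x) := (mulVec_mulVec _ _ _).symm
    rw [nonsing_inv_mul N hN, one_mulVec, h0, mulVec_zero] at this
    exact this
  have hnonneg : 0 ≤ dotProduct (N *ᵥ x) (N *ᵥ x) :=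
    Finset.sum_nonneg fun i _ => mul_self_nonneg _
  exact lt_of_le_of_ne hnonneg (fun hc => hne (dotProduct_self_eq_zero.mp hc.symm))

private lemma lu_exists : ∀ (n : ℕ) (A : Matrix (Fin n) (Fin n) ℝ),
    (∀ r (hr : r ≤ n), 1 ≤ r → 0 < leadMinor A r hr) →
    ∃ L U : Matrix (Fin n) (Fin n) ℝ,
      Lᵀ.BlockTriangular id ∧ (∀ i, L i i = 1) ∧
      U.BlockTriangular id ∧ (∀ i, 0 < U i i) ∧ A = L * U := by
  intro n
  induction n with
  | zero =>
    intro A _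
    refine ⟨1, 1, fun i j _ => i.elim0, fun i => i.elim0, fun i j _ => i.elim0,
      fun i => i.elim0, ?_⟩
    ext i j
    exact i.elim0
  | succ n ih =>
    intro A hA
    have hα : 0 < A 0 0 := by
      have h1 := hA 1 (Nat.succ_le_succ (Nat.zero_le n)) le_rfl
      rwa [leadMinor, det_fin_one, submatrix_apply,
        show Fin.castLE (Nat.succ_le_succ (Nat.zero_le n)) 0 = (0 : Fin (n+1)) from rfl] at h1
    have hα' : A 0 0 ≠ 0 := ne_of_gt hα
    set S : Matrix (Fin n) (Fin n) ℝ :=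
      Matrix.of (fun i j => A i.succ j.succ - A i.succ 0 * A 0 j.succ / A 0 0) with hSdef
    have key : ∀ (r : ℕ) (hr : r ≤ n),
        leadMinor A (r+1) (Nat.succ_le_succ hr) = A 0 0 * leadMinor S r hr := by
      intro r hr
      set c1 := Fin.castLE (Nat.succ_le_succ hr) with hc1
      set c := Fin.castLE hr with hc
      set M := A.submatrix c1 c1 with hM
      have hcs : ∀ i : Fin r, c1 i.succ = (c i).succ := fun i => Fin.ext rfl
      have hc0 : c1 0 = 0 := rfl
      have hM00 : M 0 0 = A 0 0 := rfl
      set E : Matrix (Fin (r+1)) (Fin (r+1)) ℝ :=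
        Matrix.of (Fin.cons (Fin.cons 1 0)
          (fun i => Fin.cons (M i.succ 0 / M 0 0) (fun j => if i = j then 1 else 0))) with hE
      set V : Matrix (Fin (r+1)) (Fin (r+1)) ℝ :=
        Matrix.of (Fin.cons (fun j => M 0 j)
          (fun i => Fin.cons 0 (fun j => M i.succ j.succ - M i.succ 0 * M 0 j.succ / M 0 0)))
        with hV
      have hMEV : M = E * V := by
        ext i j
        rw [mul_apply, Fin.sum_univ_succ]
        refine Fin.cases ?_ (fun i => ?_) i
        · simp [hE, hV]
        · refine Fin.cases ?_ (fun j => ?_) j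
          · simp only [hE, hV, Matrix.of_apply, Fin.cons_succ, Fin.cons_zero]
            rw [div_mul_cancel₀ _ (hM00 ▸ hα')]
            simp
          · simp only [hE, hV, Matrix.of_apply, Fin.cons_succ, Fin.cons_zero]
            rw [Finset.sum_congr rfl (fun p (_ : p ∈ Finset.univ) =>
              show (if i = p then (1:ℝ) else 0) *
                  (M p.succ j.succ - M p.succ 0 * M 0 j.succ / M 0 0)
                = if i = p then (M p.succ j.succ - M p.succ 0 * M 0 j.succ / M 0 0) else 0
              from by split <;> simp)]
            rw [Finset.sum_ite_eq]
            simp only [Finset.mem_univ, if_true]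
            field_simp
            ring
      have hsubE : E.submatrix Fin.succ Fin.succ = 1 := by
        ext i j
        simp only [submatrix_apply, hE, Matrix.of_apply, Fin.cons_succ, Matrix.one_apply]
      have hdetE : E.det = 1 := by
        rw [det_succ_row_zero, Fin.sum_univ_succ]
        have h00 : E 0 0 = 1 := rfl
        have h0s : ∀ j : Fin r, E 0 j.succ = 0 := fun j => rfl
        simp [h00, h0s, Fin.succAbove_zero, hsubE]
      have hsubV : V.submatrix Fin.succ Fin.succ = S.submatrix c c := by
        ext i j
        simp only [submatrix_apply, hV, Matrix.of_apply, Fin.cons_succ]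
        have e1 : M i.succ j.succ = A (c i).succ (c j).succ := by
          rw [hM, submatrix_apply, hcs, hcs]
        have e2 : M i.succ 0 = A (c i).succ 0 := by
          rw [hM, submatrix_apply, hcs, hc0]
        have e3 : M 0 j.succ = A 0 (c j).succ := by
          rw [hM, submatrix_apply, hcs, hc0]
        rw [e1, e2, e3, hM00, hSdef]
        rfl
      have hdetV : V.det = A 0 0 * leadMinor S r hr := by
        have h00 : V 0 0 = A 0 0 := rfl
        have h0s : ∀ i : Fin r, V i.succ 0 = 0 := fun i => rfl
        have hstep : V.det = V 0 0 * (V.submatrix Fin.succ Fin.succ).det := by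
          rw [det_succ_column_zero, Fin.sum_univ_succ]
          simp [h0s, Fin.succAbove_zero]
        rw [hstep, h00, hsubV]
        rfl
      have hlm : leadMinor A (r+1) (Nat.succ_le_succ hr) = M.det := rfl
      rw [hlm, hMEV, det_mul, hdetE, hdetV, one_mul]
    have hS : ∀ r (hr : r ≤ n), 1 ≤ r → 0 < leadMinor S r hr := by
      intro r hr h1
      have h2 := hA (r+1) (Nat.succ_le_succ hr) (by omega)
      rw [key r hr] at h2
      nlinarith [hα]
    obtain ⟨L', U', hLt, hLd, hUt, hUd, hLU⟩ := ih S hS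
    refine ⟨Matrix.of (Fin.cons (Fin.cons 1 0)
        (fun i => Fin.cons (A i.succ 0 / A 0 0) (fun j => L' i j))),
      Matrix.of (Fin.cons (fun j => A 0 j) (fun i => Fin.cons 0 (fun j => U' i j))),
      ?_, ?_, ?_, ?_, ?_⟩
    · intro i j hij
      have hij' : (j : Fin (n+1)) < i := hij
      rcases Fin.eq_zero_or_eq_succ i with rfl | ⟨i', rfl⟩
      · exact absurd hij' (by simp)
      · rcases Fin.eq_zero_or_eq_succ j with rfl | ⟨j', rfl⟩
        · simp [transpose_apply]
        · have hj'i' : (j' : Fin n) < i' := by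
            rwa [Fin.succ_lt_succ_iff] at hij'
          simp only [transpose_apply, Matrix.of_apply, Fin.cons_succ]
          exact hLt (show id j' < id i' from hj'i')
    · intro i
      rcases Fin.eq_zero_or_eq_succ i with rfl | ⟨i', rfl⟩
      · simp
      · simp only [Matrix.of_apply, Fin.cons_succ]
        exact hLd i'
    · intro i j hij
      have hij' : (j : Fin (n+1)) < i := hij
      rcases Fin.eq_zero_or_eq_succ i with rfl | ⟨i', rfl⟩
      · exact absurd hij' (by simp)
      · rcases Fin.eq_zero_or_eq_succ j with rfl | ⟨j', rfl⟩
        · simp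
        · have hj'i' : (j' : Fin n) < i' := by
            rwa [Fin.succ_lt_succ_iff] at hij'
          simp only [Matrix.of_apply, Fin.cons_succ]
          exact hUt (show id j' < id i' from hj'i')
    · intro i
      rcases Fin.eq_zero_or_eq_succ i with rfl | ⟨i', rfl⟩
      · simpa using hα
      · simp only [Matrix.of_apply, Fin.cons_succ]
        exact hUd i'
    · ext i j
      rw [mul_apply, Fin.sum_univ_succ]
      rcases Fin.eq_zero_or_eq_succ i with rfl | ⟨i', rfl⟩
      · simp
      · rcases Fin.eq_zero_or_eq_succ j with rfl | ⟨j', rfl⟩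
        · simp only [Matrix.of_apply, Fin.cons_succ, Fin.cons_zero]
          rw [div_mul_cancel₀ _ hα']
          simp
        · simp only [Matrix.of_apply, Fin.cons_succ, Fin.cons_zero]
          have hsum : ∑ p : Fin n, L' i' p * U' p j' = (L' * U') i' j' := (mul_apply).symm
          rw [hsum, ← hLU, hSdef]
          simp only [Matrix.of_apply]
          field_simp
          ring

end IwasawaAux

/-- The image of the set of positive definite symmetric matrices under the
Iwasawa projection `g = b * k ↦ k` equals the set of orthogonal matrices with
all leading principal minors positive. -/
theorem stmt7 {n : ℕ} :
    {k : Matrix (Fin n) (Fin n) ℝ | kᵀ * k = 1 ∧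
        ∃ g b : Matrix (Fin n) (Fin n) ℝ, g.PosDef ∧
          b.BlockTriangular id ∧ (∀ i, 0 < b i i) ∧ g = b * k} =
    {k : Matrix (Fin n) (Fin n) ℝ | kᵀ * k = 1 ∧
        ∀ r : ℕ, 1 ≤ r → ∀ h : r ≤ n, 0 < leadMinor k r h} := by
  ext k
  simp only [Set.mem_setOf_eq]
  constructor
  · rintro ⟨hk, g, b, hg, hb, hbd, hgbk⟩
    refine ⟨hk, fun r h1 hr => ?_⟩
    have hbu : IsUnit b.det := by
      rw [det_of_upperTriangular hb]
      exact isUnit_iff_ne_zero.mpr (ne_of_gt (Finset.prod_pos fun i _ => hbd i))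
    have hkinv : k⁻¹ = kᵀ := inv_eq_left_inv hk
    have hkt : kᵀ = g⁻¹ * b := by
      have h2 : g⁻¹ = kᵀ * b⁻¹ := by rw [hgbk, Matrix.mul_inv_rev, hkinv]
      rw [h2, Matrix.mul_assoc, Matrix.nonsing_inv_mul b hbu, Matrix.mul_one]
    have hsub : kᵀ.submatrix (Fin.castLE hr) (Fin.castLE hr)
        = (g⁻¹).submatrix (Fin.castLE hr) (Fin.castLE hr)
          * b.submatrix (Fin.castLE hr) (Fin.castLE hr) := by
      rw [hkt]
      exact submatrix_mul_upper hr _ _ hb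
    have h2 : 0 < ((g⁻¹).submatrix (Fin.castLE hr) (Fin.castLE hr)).det :=
      (posDef_submatrix_castLE hr hg.inv).det_pos
    have hbsubt : (b.submatrix (Fin.castLE hr) (Fin.castLE hr)).BlockTriangular id := by
      intro i j hij
      exact hb (show id (Fin.castLE hr j) < id (Fin.castLE hr i) from hij)
    have h3 : 0 < (b.submatrix (Fin.castLE hr) (Fin.castLE hr)).det := by
      rw [det_of_upperTriangular hbsubt]
      exact Finset.prod_pos fun i _ => hbd _
    have h4 : leadMinor k r hr
        = ((g⁻¹).submatrix (Fin.castLE hr) (Fin.castLE hr)).det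
          * (b.submatrix (Fin.castLE hr) (Fin.castLE hr)).det := by
      rw [leadMinor, ← leadMinor_transpose' hr, hsub, det_mul]
    rw [h4]
    exact mul_pos h2 h3
  · rintro ⟨hk, hmin⟩
    refine ⟨hk, ?_⟩
    have hminT : ∀ r (hr : r ≤ n), 1 ≤ r → 0 < leadMinor kᵀ r hr := by
      intro r hr h1
      have h2 := hmin r h1 hr
      rw [leadMinor] at h2 ⊢
      rwa [leadMinor_transpose' hr]
    obtain ⟨L, U, hLt, hLd, hUt, hUd, hLU⟩ := lu_exists n kᵀ hminT
    have hdetLt : Lᵀ.det = 1 := by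
      rw [det_of_upperTriangular hLt]
      exact Finset.prod_eq_one fun i _ => hLd i
    have hdetL : L.det = 1 := by rw [← det_transpose]; exact hdetLt
    set N := U * k with hN
    have hLN : L * N = 1 := by rw [hN, ← Matrix.mul_assoc, ← hLU, hk]
    have hNinv : L⁻¹ = N := inv_eq_right_inv hLN
    have hNdet : IsUnit N.det := by
      have hd := congrArg Matrix.det hLN
      rw [det_mul, det_one, hdetL, one_mul] at hd
      rw [hd]
      exact isUnit_one
    haveI : Invertible Lᵀ := (Lᵀ).invertibleOfIsUnitDet (by rw [hdetLt]; exact isUnit_one)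
    have hNTt : Nᵀ.BlockTriangular id := by
      have h1 : ((Lᵀ)⁻¹).BlockTriangular id := blockTriangular_inv_of_blockTriangular hLt
      rwa [← transpose_nonsing_inv, hNinv] at h1
    have hNd : ∀ i, N i i = 1 := by
      intro i
      have h1 := diag_mul_lower hLt hNTt i
      rw [hLN, one_apply_eq, hLd, one_mul] at h1
      exact h1.symm
    have hbd : ∀ i, 0 < (Nᵀ * U) i i := by
      intro i
      rw [diag_mul_upper hNTt hUt i, transpose_apply, hNd i, one_mul]
      exact hUd i
    exact ⟨Nᵀ * N, Nᵀ * U, posDef_transpose_mul_self hNdet, hNTt.mul hUt, hbd,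
      by rw [Matrix.mul_assoc, ← hN]⟩
end
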